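/- arXiv:1312.6210 — 4 statements merged into one kernel-verified Lean document; each statement's English description precedes it below -/
import Mathlib

section
/- Let $\Omega \subseteq \mathbb{R}^N$ be an open connected set and let $u, v$ be twice continuously differentiable functions on $\Omega$ with $v > 0$ and $-\Delta v > 0$ on $\Omega$. If $L(u,v) = (\Delta u - (u/v)\Delta v)^2 - (2\Delta v/v)\,|\nabla u - (u/v)\nabla v|^2 = 0$ everywhere on $\Omega$, then there exists $\alpha \in \mathbb{R}$ such that $u = \alpha v$ on $\Omega$. Conversely, if $u = \alpha v$ for some real $\alpha$, then $L(u,v) = 0$ on $\Omega$. -/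
open MeasureTheory

noncomputable def lap {N : ℕ} (u : EuclideanSpace ℝ (Fin N) → ℝ)
    (x : EuclideanSpace ℝ (Fin N)) : ℝ :=
  ∑ i : Fin N, fderiv ℝ (fun y => fderiv ℝ u y (EuclideanSpace.single i 1)) x
    (EuclideanSpace.single i 1)

/-!
Since `-Δv / v > 0`, `L(u, v)` is a sum of two nonnegative terms, so `L(u, v) = 0` forces
`∇u = (u / v) ∇v`, which says exactly that `u / v` has vanishing derivative; on a connected open
set `u / v` is then constant. Conversely, `u = α v` on the open set `Ω` gives `Δu = α Δv` and
`∇u = α ∇v` there, so both terms of `L(u, v)` vanish.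
-/

open Filter Topology

lemma eq_zero_of_sq_sub_mul_norm_sq_eq_zero {E : Type*} [NormedAddCommGroup E] {a c : ℝ} {w : E}
    (hc : c < 0) (h : a ^ 2 - c * ‖w‖ ^ 2 = 0) : w = 0 := by
  have hw : ‖w‖ ^ 2 = 0 := by nlinarith [sq_nonneg a, sq_nonneg ‖w‖]
  simpa using hw

section Gradient

variable {E : Type*} [NormedAddCommGroup E] [InnerProductSpace ℝ E] [CompleteSpace E]

lemma gradient_const_smul (c : ℝ) (f : E → ℝ) : gradient (c • f) = c • gradient f := by
  ext1 x
  simp [gradient, fderiv_const_smul_field]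

lemma fderiv_eq_smul_of_gradient_eq_smul {u v : E → ℝ} {x : E} {c : ℝ}
    (h : gradient u x = c • gradient v x) : fderiv ℝ u x = c • fderiv ℝ v x := by
  rw [← toDual_gradient, h, map_smul, toDual_gradient]

lemma hasFDerivAt_div_zero_of_gradient_eq {u v : E → ℝ} {x : E} (hu : DifferentiableAt ℝ u x)
    (hv : DifferentiableAt ℝ v x) (hvx : v x ≠ 0) (h : gradient u x = (u x / v x) • gradient v x) :
    HasFDerivAt (fun y => u y / v y) (0 : E →L[ℝ] ℝ) x := by
  have hinv : HasFDerivAt (fun y => (v y)⁻¹) (-(v x ^ 2)⁻¹ • fderiv ℝ v x) x :=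
    (hasDerivAt_inv hvx).comp_hasFDerivAt x hv.hasFDerivAt
  have hcoeff : u x * -(v x ^ 2)⁻¹ + (v x)⁻¹ * (u x / v x) = 0 := by
    field_simp
    ring
  have hprod := hu.hasFDerivAt.fun_mul hinv
  rw [fderiv_eq_smul_of_gradient_eq_smul h, smul_smul, smul_smul, ← add_smul, hcoeff,
    zero_smul] at hprod
  simp only [div_eq_mul_inv]
  exact hprod

theorem IsOpen.exists_eq_const_mul_of_gradient_eq {Ω : Set E} (hΩ : IsOpen Ω)
    (hconn : IsPreconnected Ω) {u v : E → ℝ} (hu : DifferentiableOn ℝ u Ω)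
    (hv : DifferentiableOn ℝ v Ω) (hv0 : ∀ x ∈ Ω, v x ≠ 0)
    (h : ∀ x ∈ Ω, gradient u x = (u x / v x) • gradient v x) : ∃ α : ℝ, ∀ x ∈ Ω, u x = α * v x := by
  have hdiff (x) (hx : x ∈ Ω) : HasFDerivAt (fun y => u y / v y) (0 : E →L[ℝ] ℝ) x :=
    hasFDerivAt_div_zero_of_gradient_eq (hu.differentiableAt (hΩ.mem_nhds hx))
      (hv.differentiableAt (hΩ.mem_nhds hx)) (hv0 x hx) (h x hx)
  obtain ⟨α, hα⟩ := hΩ.exists_is_const_of_fderiv_eq_zero hconn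
    (fun x hx => (hdiff x hx).differentiableAt.differentiableWithinAt)
    (fun x hx => (hdiff x hx).fderiv)
  exact ⟨α, fun x hx => by rw [← hα x hx, div_mul_cancel₀ _ (hv0 x hx)]⟩

end Gradient

section Laplacian

variable {N : ℕ}

lemma lap_const_smul (c : ℝ) (v : EuclideanSpace ℝ (Fin N) → ℝ) : lap (c • v) = c • lap v := by
  have hdir (e : EuclideanSpace ℝ (Fin N)) :
      (fun y => fderiv ℝ (c • v) y e) = c • fun y => fderiv ℝ v y e := by
    ext1 y
    simp [fderiv_const_smul_field]
  ext1 x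
  simp only [lap, Pi.smul_apply, Finset.smul_sum]
  refine Finset.sum_congr rfl fun i _ => ?_
  rw [hdir, fderiv_const_smul_field]
  rfl

lemma Filter.EventuallyEq.lap_eq {u w : EuclideanSpace ℝ (Fin N) → ℝ}
    {x : EuclideanSpace ℝ (Fin N)} (h : u =ᶠ[𝓝 x] w) : lap u x = lap w x := by
  unfold lap
  refine Finset.sum_congr rfl fun i _ => ?_
  have : (fun y => fderiv ℝ u y (EuclideanSpace.single i 1)) =ᶠ[𝓝 x]
      fun y => fderiv ℝ w y (EuclideanSpace.single i 1) :=
    (h.fderiv (𝕜 := ℝ)).mono fun y hy => by simp only [hy]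
  rw [this.fderiv_eq]

end Laplacian

theorem picone_equality_case_biharmonic {N : ℕ} (Ω : Set (EuclideanSpace ℝ (Fin N)))
    (hΩ : IsOpen Ω) (hconn : IsPreconnected Ω)
    (u v : EuclideanSpace ℝ (Fin N) → ℝ)
    (hu : ContDiffOn ℝ 2 u Ω) (hv : ContDiffOn ℝ 2 v Ω)
    (hvpos : ∀ x ∈ Ω, 0 < v x) (hlapv : ∀ x ∈ Ω, 0 < -lap v x) :
    ((∀ x ∈ Ω,
        (lap u x - (u x / v x) * lap v x) ^ 2
          - (2 * lap v x / v x) * ‖gradient u x - (u x / v x) • gradient v x‖ ^ 2 = 0) →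
      ∃ α : ℝ, ∀ x ∈ Ω, u x = α * v x) ∧
    (∀ α : ℝ, (∀ x ∈ Ω, u x = α * v x) →
      ∀ x ∈ Ω,
        (lap u x - (u x / v x) * lap v x) ^ 2
          - (2 * lap v x / v x) * ‖gradient u x - (u x / v x) • gradient v x‖ ^ 2 = 0) := by
  refine ⟨fun hL => ?_, fun α hα x hx => ?_⟩
  · refine hΩ.exists_eq_const_mul_of_gradient_eq hconn (hu.differentiableOn two_ne_zero)
      (hv.differentiableOn two_ne_zero) (fun x hx => (hvpos x hx).ne') fun x hx => ?_
    have hc : 2 * lap v x / v x < 0 := div_neg_of_neg_of_pos (by linarith [hlapv x hx]) (hvpos x hx)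
    exact sub_eq_zero.mp (eq_zero_of_sq_sub_mul_norm_sq_eq_zero hc (hL x hx))
  · have hloc : u =ᶠ[𝓝 x] α • v := eventually_of_mem (hΩ.mem_nhds hx) hα
    have hratio : u x / v x = α := by rw [hα x hx, mul_div_cancel_right₀ _ (hvpos x hx).ne']
    rw [hloc.lap_eq, hloc.gradient_eq, lap_const_smul, gradient_const_smul, hratio]
    simp
end

section
/- Let $\Omega \subseteq \mathbb{R}^N$ be open and let $u, v \in C^2(\Omega)$ with $u > 0$ on $\Omega$. Then at every point of $\Omega$ the following pointwise algebraic identity holds: $(\Delta v)^2 - \Delta u\,\Delta\!\left(\frac{v^2}{u}\right) = \left(\Delta v - \frac{v}{u}\Delta u\right)^2 - \frac{2\Delta u}{u}\left|\nabla v - \frac{v}{u}\nabla u\right|^2$. -/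
open MeasureTheory

set_option maxHeartbeats 2000000
theorem pointwise_picone_computation {N : ℕ} (Ω : Set (EuclideanSpace ℝ (Fin N)))
    (hΩ : IsOpen Ω) (u v : EuclideanSpace ℝ (Fin N) → ℝ)
    (hu : ContDiffOn ℝ 2 u Ω) (hv : ContDiffOn ℝ 2 v Ω)
    (hupos : ∀ x ∈ Ω, 0 < u x) :
    ∀ x ∈ Ω,
      (lap v x) ^ 2 - lap u x * lap (fun y => (v y) ^ 2 / u y) x
        = (lap v x - (v x / u x) * lap u x) ^ 2
          - (2 * lap u x / u x) * ‖gradient v x - (v x / u x) • gradient u x‖ ^ 2 := by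
  intro x hx
  classical
  have hU : u x ≠ 0 := (hupos x hx).ne'
  have hmem : Ω ∈ nhds x := hΩ.mem_nhds hx
  have hdv : ∀ y ∈ Ω, DifferentiableAt ℝ v y := fun y hy =>
    (hv.contDiffAt (hΩ.mem_nhds hy)).differentiableAt two_ne_zero
  have hdu : ∀ y ∈ Ω, DifferentiableAt ℝ u y := fun y hy =>
    (hu.contDiffAt (hΩ.mem_nhds hy)).differentiableAt two_ne_zero
  set E : Fin N → EuclideanSpace ℝ (Fin N) := fun i => EuclideanSpace.single i 1 with hEdef
  -- second-derivative differentiability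
  have hDv : ∀ i : Fin N, DifferentiableAt ℝ (fun y => fderiv ℝ v y (E i)) x := by
    intro i
    have h1 : ContDiffAt ℝ 1 (fderiv ℝ v) x :=
      (hv.contDiffAt hmem).fderiv_right (le_refl 2)
    exact ((ContinuousLinearMap.apply ℝ ℝ (E i)).differentiable.differentiableAt).comp x
      (h1.differentiableAt one_ne_zero)
  have hDu : ∀ i : Fin N, DifferentiableAt ℝ (fun y => fderiv ℝ u y (E i)) x := by
    intro i
    have h1 : ContDiffAt ℝ 1 (fderiv ℝ u) x :=
      (hu.contDiffAt hmem).fderiv_right (le_refl 2)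
    exact ((ContinuousLinearMap.apply ℝ ℝ (E i)).differentiable.differentiableAt).comp x
      (h1.differentiableAt one_ne_zero)
  -- the function w = v^2/u equals v*v*(u)⁻¹
  have hweq : (fun y => (v y) ^ 2 / u y) = fun y => v y * v y * (u y)⁻¹ := by
    funext y; rw [sq]; rfl
  -- first derivative of w on Ω
  have hwd : ∀ y ∈ Ω, ∀ i : Fin N,
      fderiv ℝ (fun z => v z * v z * (u z)⁻¹) y (E i)
        = v y * v y * -((u y)⁻¹ * fderiv ℝ u y (E i) * (u y)⁻¹)
          + (u y)⁻¹ * (v y * fderiv ℝ v y (E i) + v y * fderiv ℝ v y (E i)) := by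
    intro y hy i
    have hUy : u y ≠ 0 := (hupos y hy).ne'
    have hinv : HasFDerivAt (fun z => (u z)⁻¹)
        ((-ContinuousLinearMap.mulLeftRight ℝ ℝ (u y)⁻¹ (u y)⁻¹).comp (fderiv ℝ u y)) y :=
      (hasFDerivAt_inv' hUy).comp y (hdu y hy).hasFDerivAt
    have hw : HasFDerivAt (fun z => v z * v z * (u z)⁻¹) _ y :=
      ((hdv y hy).hasFDerivAt.mul (hdv y hy).hasFDerivAt).mul hinv
    rw [hw.fderiv]
    simp only [ContinuousLinearMap.add_apply, ContinuousLinearMap.smul_apply,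
      ContinuousLinearMap.neg_apply, ContinuousLinearMap.comp_apply,
      ContinuousLinearMap.mulLeftRight_apply, smul_eq_mul, Pi.mul_apply, Pi.neg_apply, Pi.pow_apply]
  -- second derivative of w at x
  have hkey : ∀ i : Fin N,
      fderiv ℝ (fun y => fderiv ℝ (fun z => v z * v z * (u z)⁻¹) y (E i)) x (E i)
        = (2 / u x) * (fderiv ℝ v x (E i) * fderiv ℝ v x (E i))
          + (-4 * v x / (u x * u x)) * (fderiv ℝ v x (E i) * fderiv ℝ u x (E i))
          + (2 * (v x * v x) / (u x * u x * u x)) * (fderiv ℝ u x (E i) * fderiv ℝ u x (E i))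
          + (2 * v x / u x) * fderiv ℝ (fun y => fderiv ℝ v y (E i)) x (E i)
          + (-(v x * v x) / (u x * u x)) * fderiv ℝ (fun y => fderiv ℝ u y (E i)) x (E i) := by
    intro i
    have hclaim : (fun y => fderiv ℝ (fun z => v z * v z * (u z)⁻¹) y (E i))
        =ᶠ[nhds x] fun y =>
          v y * v y * -((u y)⁻¹ * fderiv ℝ u y (E i) * (u y)⁻¹)
            + (u y)⁻¹ * (v y * fderiv ℝ v y (E i) + v y * fderiv ℝ v y (E i)) := by
      filter_upwards [hmem] with y hy
      exact hwd y hy i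
    rw [hclaim.fderiv_eq]
    have hvx := (hdv x hx).hasFDerivAt
    have hux := (hdu x hx).hasFDerivAt
    have hinv : HasFDerivAt (fun z => (u z)⁻¹)
        ((-ContinuousLinearMap.mulLeftRight ℝ ℝ (u x)⁻¹ (u x)⁻¹).comp (fderiv ℝ u x)) x :=
      (hasFDerivAt_inv' hU).comp x hux
    have hDvi := (hDv i).hasFDerivAt
    have hDui := (hDu i).hasFDerivAt
    have hAB : HasFDerivAt (fun y =>
        v y * v y * -((u y)⁻¹ * fderiv ℝ u y (E i) * (u y)⁻¹)
          + (u y)⁻¹ * (v y * fderiv ℝ v y (E i) + v y * fderiv ℝ v y (E i))) _ x :=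
      ((hvx.mul hvx).mul (((hinv.mul hDui).mul hinv).neg)).add
        (hinv.mul ((hvx.mul hDvi).add (hvx.mul hDvi)))
    rw [hAB.fderiv]
    simp only [ContinuousLinearMap.add_apply, ContinuousLinearMap.smul_apply,
      ContinuousLinearMap.neg_apply, ContinuousLinearMap.comp_apply,
      ContinuousLinearMap.mulLeftRight_apply, smul_eq_mul, Pi.mul_apply, Pi.neg_apply, Pi.pow_apply]
    field_simp
    ring
  -- gradient components
  have hgradv : ∀ i : Fin N, gradient v x i = fderiv ℝ v x (E i) := by
    intro i
    have h : fderiv ℝ v x (E i) = @inner ℝ _ _ (gradient v x) (E i) := by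
      rw [gradient, InnerProductSpace.toDual_symm_apply]
    rw [h, hEdef, EuclideanSpace.inner_single_right]
    simp [EuclideanSpace.inner_single_right]
  have hgradu : ∀ i : Fin N, gradient u x i = fderiv ℝ u x (E i) := by
    intro i
    have h : fderiv ℝ u x (E i) = @inner ℝ _ _ (gradient u x) (E i) := by
      rw [gradient, InnerProductSpace.toDual_symm_apply]
    rw [h, hEdef, EuclideanSpace.inner_single_right]
    simp [EuclideanSpace.inner_single_right]
  -- norm squared
  have hnorm : ‖gradient v x - (v x / u x) • gradient u x‖ ^ 2
      = ∑ i : Fin N, (fderiv ℝ v x (E i) - v x / u x * fderiv ℝ u x (E i)) ^ 2 := by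
    rw [← real_inner_self_eq_norm_sq, PiLp.inner_apply]
    refine Finset.sum_congr rfl fun i _ => ?_
    simp [PiLp.sub_apply, PiLp.smul_apply, smul_eq_mul, hgradv i, hgradu i,
      RCLike.inner_apply, sq]
  -- sums
  have hsum : ∀ (c1 c2 c3 c4 c5 : ℝ),
      (∑ i : Fin N, (c1 * (fderiv ℝ v x (E i) * fderiv ℝ v x (E i))
        + c2 * (fderiv ℝ v x (E i) * fderiv ℝ u x (E i))
        + c3 * (fderiv ℝ u x (E i) * fderiv ℝ u x (E i))
        + c4 * fderiv ℝ (fun y => fderiv ℝ v y (E i)) x (E i)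
        + c5 * fderiv ℝ (fun y => fderiv ℝ u y (E i)) x (E i)))
      = c1 * (∑ i : Fin N, fderiv ℝ v x (E i) * fderiv ℝ v x (E i))
        + c2 * (∑ i : Fin N, fderiv ℝ v x (E i) * fderiv ℝ u x (E i))
        + c3 * (∑ i : Fin N, fderiv ℝ u x (E i) * fderiv ℝ u x (E i))
        + c4 * (∑ i : Fin N, fderiv ℝ (fun y => fderiv ℝ v y (E i)) x (E i))
        + c5 * (∑ i : Fin N, fderiv ℝ (fun y => fderiv ℝ u y (E i)) x (E i)) := by
    intro c1 c2 c3 c4 c5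
    simp only [Finset.sum_add_distrib, ← Finset.mul_sum]
  have hlapv : lap v x = ∑ i : Fin N, fderiv ℝ (fun y => fderiv ℝ v y (E i)) x (E i) := rfl
  have hlapu : lap u x = ∑ i : Fin N, fderiv ℝ (fun y => fderiv ℝ u y (E i)) x (E i) := rfl
  have hlapw : lap (fun y => (v y) ^ 2 / u y) x
      = (2 / u x) * (∑ i : Fin N, fderiv ℝ v x (E i) * fderiv ℝ v x (E i))
        + (-4 * v x / (u x * u x)) * (∑ i : Fin N, fderiv ℝ v x (E i) * fderiv ℝ u x (E i))
        + (2 * (v x * v x) / (u x * u x * u x)) * (∑ i : Fin N, fderiv ℝ u x (E i) * fderiv ℝ u x (E i))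
        + (2 * v x / u x) * (∑ i : Fin N, fderiv ℝ (fun y => fderiv ℝ v y (E i)) x (E i))
        + (-(v x * v x) / (u x * u x)) * (∑ i : Fin N, fderiv ℝ (fun y => fderiv ℝ u y (E i)) x (E i)) := by
    rw [hweq, lap, ← hsum]
    exact Finset.sum_congr rfl fun i _ => hkey i
  have h2 : (∑ i : Fin N, (fderiv ℝ v x (E i) - v x / u x * fderiv ℝ u x (E i)) ^ 2)
      = 1 * (∑ i : Fin N, fderiv ℝ v x (E i) * fderiv ℝ v x (E i))
        + (-2 * (v x / u x)) * (∑ i : Fin N, fderiv ℝ v x (E i) * fderiv ℝ u x (E i))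
        + (v x / u x * (v x / u x)) * (∑ i : Fin N, fderiv ℝ u x (E i) * fderiv ℝ u x (E i))
        + 0 * (∑ i : Fin N, fderiv ℝ (fun y => fderiv ℝ v y (E i)) x (E i))
        + 0 * (∑ i : Fin N, fderiv ℝ (fun y => fderiv ℝ u y (E i)) x (E i)) := by
    rw [← hsum]
    exact Finset.sum_congr rfl fun i _ => by ring
  rw [hlapv, hlapu, hlapw, hnorm, h2]
  field_simp
  ring
end

section
/- Let $f:\mathbb{R}\to(0,\infty)$ be a $C^2$ function and let $u, v$ be differentiable functions on a connected open set $\Omega \subseteq \mathbb{R}^N$ with $v \neq 0$, such that $f'(v) = 1$ identically on $\Omega$ and $f(v)\nabla u - u f'(v)\nabla v = 0$ on $\Omega$. Then there exist constants $c, d \in \mathbb{R}$ with $u = cv + d$ on $\Omega$; moreover, if $u, v$ are $C^2$, then $f(v)\Delta u = u f'(v)\Delta v$ on $\Omega$. -/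
/-!
Since `f' ∘ v = 1`, the function `f ∘ v - v` has zero derivative, so `f ∘ v = v + a` on the
connected set `Ω`. The gradient relation says exactly that `u / (f ∘ v)` has zero derivative, so
`u = c · (f ∘ v) = c v + c a`. Being affine in `v` near every point of `Ω`, `u` has
`Δu = c Δv`, whence `f(v) Δu = c f(v) Δv = u Δv`.
-/

open MeasureTheory

section
variable {E : Type*} [NormedAddCommGroup E] [NormedSpace ℝ E] {x : E}

theorem HasFDerivAt.comp_of_deriv_eq_one {f : ℝ → ℝ} {v : E → ℝ} {v' : E →L[ℝ] ℝ}
    (hf : DifferentiableAt ℝ f (v x)) (hf1 : deriv f (v x) = 1) (hv : HasFDerivAt v v' x) :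
    HasFDerivAt (fun y => f (v y)) v' x := by
  have h := hf.hasDerivAt.comp_hasFDerivAt x hv
  rwa [hf1, one_smul] at h

theorem HasFDerivAt.div_eq_zero_of_smul_eq {u F : E → ℝ} {u' F' : E →L[ℝ] ℝ}
    (hu : HasFDerivAt u u' x) (hF : HasFDerivAt F F' x) (hFx : F x ≠ 0)
    (h : F x • u' = u x • F') : HasFDerivAt (fun y => u y / F y) (0 : E →L[ℝ] ℝ) x := by
  have hinv : HasFDerivAt (fun y => (F y)⁻¹) ((-(F x ^ 2)⁻¹ : ℝ) • F') x :=
    (hasDerivAt_inv hFx).comp_hasFDerivAt x hF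
  have hu' : u' = (u x / F x) • F' := by
    rw [div_eq_inv_mul, mul_smul, ← h, smul_smul, inv_mul_cancel₀ hFx, one_smul]
  refine (hu.mul hinv).congr_fderiv ?_
  rw [hu']
  match_scalars
  field_simp
  ring

end

section
variable {E : Type*} [NormedAddCommGroup E] [InnerProductSpace ℝ E] [CompleteSpace E]
  {f g : E → ℝ} {x : E}

theorem smul_gradient_eq_smul_gradient_iff (a b : ℝ) :
    a • gradient f x = b • gradient g x ↔ a • fderiv ℝ f x = b • fderiv ℝ g x := by
  simp only [gradient, ← map_smul, (InnerProductSpace.toDual ℝ E).symm.injective.eq_iff]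

end

theorem lap_congr {N : ℕ} {u w : EuclideanSpace ℝ (Fin N) → ℝ}
    {x : EuclideanSpace ℝ (Fin N)} (h : u =ᶠ[nhds x] w) : lap u x = lap w x := by
  unfold lap
  refine Finset.sum_congr rfl fun i _ => ?_
  have hi : (fun y => fderiv ℝ u y (EuclideanSpace.single i 1)) =ᶠ[nhds x]
      fun y => fderiv ℝ w y (EuclideanSpace.single i 1) :=
    h.fderiv.mono fun y (hy : fderiv ℝ u y = fderiv ℝ w y) => by simp only [hy]
  rw [hi.fderiv_eq]

theorem lap_const_mul_add {N : ℕ} (c d : ℝ) (v : EuclideanSpace ℝ (Fin N) → ℝ)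
    (x : EuclideanSpace ℝ (Fin N)) : lap (fun y => c * v y + d) x = c * lap v x := by
  have hmul : ∀ (g : EuclideanSpace ℝ (Fin N) → ℝ) y,
      fderiv ℝ (fun z => c * g z) y = c • fderiv ℝ g y := fun g y =>
    congrFun (fderiv_const_smul_field (f := g) c) y
  simp only [lap, fderiv_add_const, hmul, smul_apply, smul_eq_mul, Finset.mul_sum]

theorem equality_case_nonlinear_picone_general {N : ℕ} (Ω : Set (EuclideanSpace ℝ (Fin N)))
    (hΩ : IsOpen Ω) (hconn : IsPreconnected Ω)
    (f : ℝ → ℝ) (hf : ContDiff ℝ 2 f) (hfpos : ∀ y : ℝ, 0 < f y)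
    (u v : EuclideanSpace ℝ (Fin N) → ℝ)
    (hu : DifferentiableOn ℝ u Ω) (hv : DifferentiableOn ℝ v Ω)
    (hf1 : ∀ x ∈ Ω, deriv f (v x) = 1)
    (hgrad : ∀ x ∈ Ω,
      f (v x) • gradient u x - (u x * deriv f (v x)) • gradient v x = 0) :
    (∃ c d : ℝ, ∀ x ∈ Ω, u x = c * v x + d) ∧
    (ContDiffOn ℝ 2 u Ω → ContDiffOn ℝ 2 v Ω →
      ∀ x ∈ Ω, f (v x) * lap u x = u x * deriv f (v x) * lap v x) := by
  have hfv : ∀ x ∈ Ω, HasFDerivAt (fun y => f (v y)) (fderiv ℝ v x) x := fun x hx =>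
    ((hv.differentiableAt (hΩ.mem_nhds hx)).hasFDerivAt).comp_of_deriv_eq_one
      (hf.differentiable two_ne_zero _) (hf1 x hx)
  obtain ⟨a, hfv_eq⟩ : ∃ a, ∀ x ∈ Ω, f (v x) = v x + a :=
    hΩ.exists_eq_add_of_fderiv_eq hconn
      (fun x hx => (hfv x hx).differentiableAt.differentiableWithinAt) hv
      fun x hx => (hfv x hx).fderiv
  have hquot : ∀ x ∈ Ω, HasFDerivAt (fun y => u y / f (v y)) (0 : _ →L[ℝ] ℝ) x := by
    intro x hx
    have h := hgrad x hx
    rw [hf1 x hx, mul_one, sub_eq_zero, smul_gradient_eq_smul_gradient_iff] at h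
    exact (hu.differentiableAt (hΩ.mem_nhds hx)).hasFDerivAt.div_eq_zero_of_smul_eq
      (hfv x hx) (hfpos _).ne' h
  obtain ⟨c, hc⟩ := hΩ.exists_is_const_of_fderiv_eq_zero hconn
    (fun x hx => (hquot x hx).differentiableAt.differentiableWithinAt)
    fun x hx => (hquot x hx).fderiv
  have hu_eq : ∀ x ∈ Ω, u x = c * f (v x) := fun x hx => by
    rw [← hc x hx, div_mul_cancel₀ _ (hfpos _).ne']
  have hu_lin : ∀ x ∈ Ω, u x = c * v x + c * a := fun x hx => by
    rw [hu_eq x hx, hfv_eq x hx, mul_add]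
  refine ⟨⟨c, c * a, hu_lin⟩, fun _ _ x hx => ?_⟩
  rw [lap_congr (Filter.eventuallyEq_of_mem (hΩ.mem_nhds hx) hu_lin), lap_const_mul_add,
    hf1 x hx, hu_eq x hx]
  ring

theorem equality_case_nonlinear_picone {N : ℕ} (Ω : Set (EuclideanSpace ℝ (Fin N)))
    (hΩ : IsOpen Ω) (hconn : IsPreconnected Ω)
    (f : ℝ → ℝ) (hf : ContDiff ℝ 2 f) (hfpos : ∀ y : ℝ, 0 < f y)
    (u v : EuclideanSpace ℝ (Fin N) → ℝ)
    (hu : DifferentiableOn ℝ u Ω) (hv : DifferentiableOn ℝ v Ω)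
    (hvne : ∀ x ∈ Ω, v x ≠ 0)
    (hf1 : ∀ x ∈ Ω, deriv f (v x) = 1)
    (hgrad : ∀ x ∈ Ω,
      f (v x) • gradient u x - (u x * deriv f (v x)) • gradient v x = 0) :
    (∃ c d : ℝ, ∀ x ∈ Ω, u x = c * v x + d) ∧
    (ContDiffOn ℝ 2 u Ω → ContDiffOn ℝ 2 v Ω →
      ∀ x ∈ Ω, f (v x) * lap u x = u x * deriv f (v x) * lap v x) :=
  equality_case_nonlinear_picone_general Ω hΩ hconn f hf hfpos u v hu hv hf1 hgrad
end

section
/- Let $\Omega \subseteq \mathbb{R}^N$ be open, $v \in C^2(\Omega)$ with $v > 0$ and $-\Delta v > 0$ on $\Omega$, and $w \in C^2(\Omega)$. Then at every point of $\Omega$: $|\Delta w|^2 \ge \Delta v\,\Delta\!\left(\frac{w^2}{v}\right)$. -/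
/-!
Picone's identity: for `v ≠ 0`, with `q = w / v`,
`Δ(w² / v) = 2 q Δw - q² Δv + (2 / v) |∇w - q ∇v|²`, hence
`(Δw)² - Δv Δ(w² / v) = (Δw - q Δv)² - (2 Δv / v) |∇w - q ∇v|²`,
which is nonnegative when `v > 0` and `Δv < 0`.
-/

open MeasureTheory

section

variable {E : Type*} [NormedAddCommGroup E] [NormedSpace ℝ E] {f g : E → ℝ} {x : E}

theorem HasFDerivAt.fun_div {f' g' : E →L[ℝ] ℝ} (hf : HasFDerivAt f f' x)
    (hg : HasFDerivAt g g' x) (hx : g x ≠ 0) :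
    HasFDerivAt (fun y => f y / g y) ((g x)⁻¹ • (f' - (f x / g x) • g')) x := by
  have h : HasFDerivAt (fun y => f y * (g y)⁻¹) _ x :=
    hf.mul ((hasDerivAt_inv hx).comp_hasFDerivAt x hg)
  simp only [← div_eq_mul_inv] at h
  refine h.congr_fderiv ?_
  ext e
  simp only [neg_smul, smul_neg, add_apply, neg_apply, smul_apply, smul_eq_mul, sub_apply]
  field_simp
  ring

theorem fderiv_sq_div_apply (hf : DifferentiableAt ℝ f x) (hg : DifferentiableAt ℝ g x)
    (hx : g x ≠ 0) (e : E) :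
    fderiv ℝ (fun y => f y ^ 2 / g y) x e
      = 2 * (f x / g x) * fderiv ℝ f x e - (f x / g x) ^ 2 * fderiv ℝ g x e := by
  rw [((hf.hasFDerivAt.pow 2).fun_div hg.hasFDerivAt hx).fderiv]
  simp only [Nat.add_one_sub_one, pow_one, nsmul_eq_mul, Nat.cast_ofNat,
    smul_apply, sub_apply, smul_eq_mul]
  field_simp

theorem ContDiffAt.differentiableAt_fderiv_apply (hf : ContDiffAt ℝ 2 f x) (e : E) :
    DifferentiableAt ℝ (fun y => fderiv ℝ f y e) x :=
  ((hf.fderiv_right (m := 1) le_rfl).differentiableAt one_ne_zero).clm_apply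
    (differentiableAt_const e)

theorem fderiv_fderiv_sq_div_apply (hf : ContDiffAt ℝ 2 f x) (hg : ContDiffAt ℝ 2 g x)
    (hx : g x ≠ 0) (e : E) :
    fderiv ℝ (fun y => fderiv ℝ (fun z => f z ^ 2 / g z) y e) x e
      = 2 * (f x / g x) * fderiv ℝ (fun y => fderiv ℝ f y e) x e
        - (f x / g x) ^ 2 * fderiv ℝ (fun y => fderiv ℝ g y e) x e
        + 2 / g x * (fderiv ℝ f x e - f x / g x * fderiv ℝ g x e) ^ 2 := by
  have hf_diff := (hf.eventually (by simp)).mono fun y hy => hy.differentiableAt two_ne_zero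
  have hg_diff := (hg.eventually (by simp)).mono fun y hy => hy.differentiableAt two_ne_zero
  have hnear : (fun y => fderiv ℝ (fun z => f z ^ 2 / g z) y e) =ᶠ[nhds x]
      fun y => 2 * (f y / g y) * fderiv ℝ f y e - (f y / g y) ^ 2 * fderiv ℝ g y e := by
    filter_upwards [hf_diff, hg_diff, hg.continuousAt.eventually_ne hx] with y hfy hgy hgy0
    exact fderiv_sq_div_apply hfy hgy hgy0 e
  have hq := (hf.differentiableAt two_ne_zero).hasFDerivAt.fun_div
    (hg.differentiableAt two_ne_zero).hasFDerivAt hx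
  have hD : HasFDerivAt
      (fun y => 2 * (f y / g y) * fderiv ℝ f y e - (f y / g y) ^ 2 * fderiv ℝ g y e) _ x :=
    ((hq.const_mul 2).mul (hf.differentiableAt_fderiv_apply e).hasFDerivAt).sub
      ((hq.pow 2).mul (hg.differentiableAt_fderiv_apply e).hasFDerivAt)
  rw [hnear.fderiv_eq, hD.fderiv]
  simp only [Nat.add_one_sub_one, pow_one, nsmul_eq_mul, Nat.cast_ofNat, sub_apply, add_apply,
    smul_apply, smul_eq_mul]
  field_simp
  ring

end

theorem lap_sq_div {N : ℕ} {v w : EuclideanSpace ℝ (Fin N) → ℝ}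
    {x : EuclideanSpace ℝ (Fin N)}
    (hw : ContDiffAt ℝ 2 w x) (hv : ContDiffAt ℝ 2 v x) (hx : v x ≠ 0) :
    lap (fun y => w y ^ 2 / v y) x
      = 2 * (w x / v x) * lap w x - (w x / v x) ^ 2 * lap v x
        + 2 / v x * ∑ i, (fderiv ℝ w x (EuclideanSpace.single i 1)
          - w x / v x * fderiv ℝ v x (EuclideanSpace.single i 1)) ^ 2 := by
  simp only [lap, fderiv_fderiv_sq_div_apply hw hv hx, Finset.sum_add_distrib,
    Finset.sum_sub_distrib, Finset.mul_sum]

theorem mul_picone_le_sq {a b c t : ℝ} (hb : b ≤ 0) (hc : 0 ≤ c) :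
    b * (2 * t * a - t ^ 2 * b + c) ≤ a ^ 2 := by
  nlinarith [sq_nonneg (a - t * b), mul_nonpos_of_nonpos_of_nonneg hb hc]

theorem biharmonic_picone_inequality {N : ℕ} (Ω : Set (EuclideanSpace ℝ (Fin N)))
    (hΩ : IsOpen Ω) (v w : EuclideanSpace ℝ (Fin N) → ℝ)
    (hv : ContDiffOn ℝ 2 v Ω) (hw : ContDiffOn ℝ 2 w Ω)
    (hvpos : ∀ x ∈ Ω, 0 < v x) (hlapv : ∀ x ∈ Ω, 0 < -lap v x) :
    ∀ x ∈ Ω, lap v x * lap (fun y => (w y) ^ 2 / v y) x ≤ (lap w x) ^ 2 := by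
  intro x hx
  have hvx := hvpos x hx
  rw [lap_sq_div (hw.contDiffAt (hΩ.mem_nhds hx)) (hv.contDiffAt (hΩ.mem_nhds hx)) hvx.ne']
  exact mul_picone_le_sq (by linarith [hlapv x hx]) (by positivity)
end
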